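/- arXiv:1104.0746 — 3 statements merged into one kernel-verified Lean document; each statement's English description precedes it below -/
import Mathlib

section
/- Let F_q be a finite field with q elements and let J be any ideal of the polynomial ring F_q[x_1,...,x_n]. Then the ideal J + ⟨x_1^q − x_1, ..., x_n^q − x_n⟩ is a radical ideal, i.e., it equals its own radical. -/
open MvPolynomial

/-!
Modulo `I = J + ⟨X i ^ q - X i⟩`, the Frobenius `x ↦ x ^ q` is an `F`-algebra endomorphism of the
quotient fixing every generator `X i`, hence the identity. A ring in which `x ^ q = x` for all `x`
is reduced: if `x ^ m = 0` then `x = x ^ q ^ m = 0`, because `m ≤ q ^ m`.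
-/

theorem pow_pow_eq_self_of_forall_pow_eq_self {M : Type*} [Monoid M] {q : ℕ}
    (h : ∀ x : M, x ^ q = x) (k : ℕ) (x : M) : x ^ q ^ k = x := by
  induction k with
  | zero => simp
  | succ k ih => rw [pow_succ, pow_mul, ih, h]

theorem isReduced_of_forall_pow_eq_self {R : Type*} [MonoidWithZero R] {q : ℕ} (hq : 1 < q)
    (h : ∀ x : R, x ^ q = x) : IsReduced R where
  eq_zero x := fun ⟨m, hm⟩ => by
    rw [← pow_pow_eq_self_of_forall_pow_eq_self h m x]
    exact pow_eq_zero_of_le (Nat.lt_pow_self hq).le hm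

theorem MvPolynomial.algHom_pow_card_eq_self {σ F A : Type*} [Field F] [Fintype F] [CommRing A]
    [Algebra F A] (φ : MvPolynomial σ F →ₐ[F] A) (hX : ∀ i, φ (X i) ^ Fintype.card F = φ (X i))
    (p : MvPolynomial σ F) : φ p ^ Fintype.card F = φ p := by
  have : (FiniteField.frobeniusAlgHom F A).comp φ = φ := algHom_ext hX
  exact DFunLike.congr_fun this p

theorem radical_of_add_span_fieldPolynomials
    {F : Type*} [Field F] [Fintype F] {q : ℕ} (hq : Fintype.card F = q)
    (n : ℕ) (J : Ideal (MvPolynomial (Fin n) F)) :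
    (J + Ideal.span (Set.range fun i : Fin n =>
        (X i : MvPolynomial (Fin n) F) ^ q - X i)).radical
      = J + Ideal.span (Set.range fun i : Fin n =>
        (X i : MvPolynomial (Fin n) F) ^ q - X i) := by
  subst hq
  set I := J + Ideal.span (Set.range fun i : Fin n =>
    (X i : MvPolynomial (Fin n) F) ^ Fintype.card F - X i)
  have hX (i : Fin n) : Ideal.Quotient.mkₐ F I (X i) ^ Fintype.card F
      = Ideal.Quotient.mkₐ F I (X i) := by
    rw [← map_pow, Ideal.Quotient.mkₐ_eq_mk, Ideal.Quotient.eq]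
    exact Ideal.mem_sup_right (Ideal.subset_span ⟨i, rfl⟩)
  have hfrob (x : MvPolynomial (Fin n) F ⧸ I) : x ^ Fintype.card F = x := by
    obtain ⟨p, rfl⟩ := Ideal.Quotient.mkₐ_surjective F I x
    exact algHom_pow_card_eq_self _ hX p
  have := isReduced_of_forall_pow_eq_self Fintype.one_lt_card hfrob
  exact ((Ideal.isRadical_iff_quotient_reduced I).2 this).radical
end

section
/- Strong Nullstellensatz in finite fields: Let F_q be a finite field with q elements and let J be an ideal of F_q[x_1,...,x_n]. Then I(V(J)) = J + ⟨x_1^q − x_1, ..., x_n^q − x_n⟩, where V(J) = {a ∈ F_q^n : f(a) = 0 for all f ∈ J} is the affine variety of J over F_q itself, and I(V(J)) = {f ∈ F_q[x_1,...,x_n] : f(a) = 0 for all a ∈ V(J)} is its vanishing ideal. -/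
/-!
A point `a ∉ V(J)` is detected by some `g ∈ J` with `g a ≠ 0`, and multiplying such `g` by the
indicator polynomial of `a` yields `u ∈ J` equal to `1` off `V(J)` and `0` on it. If `f` vanishes on
`V(J)`, then `f - f u` vanishes on all of `K^σ`. Modulo the field polynomials `X i ^ q - X i` every
polynomial reduces to one of degree `< q` in each variable, and such a polynomial vanishing on
`K^σ` is zero; so `f - f u` lies in the ideal of field polynomials and `f = f u + (f - f u)`.
-/

open MvPolynomial

universe u v

theorem exists_pow_eq_pow_lt_of_pow_eq_self {M : Type*} [Monoid M] {x : M} {q : ℕ} (hq : 1 < q)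
    (hx : x ^ q = x) (e : ℕ) : ∃ e' < q, x ^ e = x ^ e' := by
  induction e using Nat.strong_induction_on with
  | _ e ih =>
    by_cases he : e < q
    · exact ⟨e, he, rfl⟩
    · obtain ⟨e', he', h⟩ := ih (e - q + 1) (by omega)
      refine ⟨e', he', ?_⟩
      calc x ^ e = x ^ (e - q) * x ^ q := by rw [← pow_add, Nat.sub_add_cancel (not_lt.mp he)]
        _ = x ^ (e - q + 1) := by rw [hx, pow_succ]
        _ = x ^ e' := h

namespace MvPolynomial

theorem rename_mem_restrictDegree {σ τ R : Type*} [CommSemiring R] (e : σ ≃ τ)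
    {p : MvPolynomial σ R} {m : ℕ} (hp : p ∈ restrictDegree σ R m) :
    rename e p ∈ restrictDegree τ R m := by
  classical
  rw [mem_restrictDegree] at hp ⊢
  intro s hs j
  rw [support_rename_of_injective e.injective] at hs
  obtain ⟨t, ht, rfl⟩ := Finset.mem_image.mp hs
  rw [← e.apply_symm_apply j, Finsupp.mapDomain_apply e.injective]
  exact hp t ht _

section FiniteField

variable {K : Type u} [Field K] [Fintype K]

/-- `eq_zero_of_eval_eq_zero` with `σ` and `K` in independent universes. -/
theorem eq_zero_of_eval_eq_zero' {σ : Type v} [Finite σ] {p : MvPolynomial σ K}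
    (h : ∀ v : σ → K, eval v p = 0) (hp : p ∈ restrictDegree σ K (Fintype.card K - 1)) :
    p = 0 := by
  let e : σ ≃ ULift.{u} (Fin (Nat.card σ)) := (Finite.equivFin σ).trans Equiv.ulift.symm
  have hrename : rename e p = 0 :=
    eq_zero_of_eval_eq_zero _ _ _ (fun v => by rw [eval_rename]; exact h _)
      (rename_mem_restrictDegree e hp)
  exact rename_injective e e.injective (by rw [hrename, map_zero])

variable {σ : Type*}

noncomputable def fieldIdeal (σ K : Type*) [Field K] [Fintype K] : Ideal (MvPolynomial σ K) :=
  Ideal.span (Set.range fun i : σ => X i ^ Fintype.card K - X i)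

theorem fieldIdeal_le_ker_eval (a : σ → K) : fieldIdeal σ K ≤ RingHom.ker (eval a) := by
  rw [fieldIdeal, Ideal.span_le]
  rintro _ ⟨i, rfl⟩
  simp [FiniteField.pow_card]

theorem fieldIdeal_le_vanishingIdeal (V : Set (σ → K)) : fieldIdeal σ K ≤ vanishingIdeal K V :=
  fun _ hp a _ => fieldIdeal_le_ker_eval a hp

theorem restrictDegree_sup_fieldIdeal_eq_top [Fintype σ] :
    restrictDegree σ K (Fintype.card K - 1) ⊔ (fieldIdeal σ K).restrictScalars K = ⊤ := by
  refine Submodule.eq_top_iff'.mpr fun p => ?_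
  induction p using MvPolynomial.induction_on' with
  | monomial d c =>
    have hX (i : σ) : ∃ e < Fintype.card K, Ideal.Quotient.mk (fieldIdeal σ K) (X i) ^ d i =
        Ideal.Quotient.mk (fieldIdeal σ K) (X i) ^ e := by
      refine exists_pow_eq_pow_lt_of_pow_eq_self Fintype.one_lt_card ?_ (d i)
      rw [← map_pow, Ideal.Quotient.eq]
      exact Ideal.subset_span ⟨i, rfl⟩
    choose e he hXe using hX
    let d' : σ →₀ ℕ := Finsupp.equivFunOnFinite.symm e
    have hreduced : monomial d' c ∈ restrictDegree σ K (Fintype.card K - 1) := by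
      rw [mem_restrictDegree]
      intro s hs i
      rw [Finset.mem_singleton.mp (support_monomial_subset hs)]
      exact Nat.le_sub_one_of_lt (he i)
    have hcongr : monomial d c - monomial d' c ∈ fieldIdeal σ K := by
      rw [← Ideal.Quotient.eq, monomial_eq, monomial_eq, Finsupp.prod_fintype _ _ (by simp),
        Finsupp.prod_fintype _ _ (by simp)]
      simp only [map_mul, map_prod, map_pow, hXe, d', Finsupp.coe_equivFunOnFinite_symm]
    exact Submodule.mem_sup.mpr ⟨_, hreduced, _, hcongr, add_sub_cancel _ _⟩
  | add p q hp hq => exact add_mem hp hq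

theorem mem_fieldIdeal_of_forall_eval_eq_zero [Fintype σ] {p : MvPolynomial σ K}
    (hp : ∀ a, eval a p = 0) : p ∈ fieldIdeal σ K := by
  obtain ⟨r, hr, s, hs, rfl⟩ := Submodule.mem_sup.mp
    (restrictDegree_sup_fieldIdeal_eq_top (σ := σ) (K := K) ▸ Submodule.mem_top (x := p))
  have hr0 : r = 0 := eq_zero_of_eval_eq_zero'
    (fun a => by simpa [RingHom.mem_ker.mp (fieldIdeal_le_ker_eval a hs)] using hp a) hr
  simpa [hr0] using hs

theorem exists_mem_eval_eq_indicator_compl_zeroLocus [Fintype σ] (J : Ideal (MvPolynomial σ K)) :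
    ∃ u ∈ J, ∀ b, eval b u = (zeroLocus K J)ᶜ.indicator 1 b := by
  classical
  have hpoint (a : ↥(zeroLocus K J)ᶜ) : ∃ w ∈ J, ∀ b, eval b w = if b = a then 1 else 0 := by
    obtain ⟨g, hgJ, hga⟩ : ∃ g ∈ J, eval (a : σ → K) g ≠ 0 := by
      have ha : (a : σ → K) ∉ zeroLocus K J := a.2
      simpa [mem_zeroLocus_iff] using ha
    refine ⟨C (eval (a : σ → K) g)⁻¹ * indicator (a : σ → K) * g, J.mul_mem_left _ hgJ, fun b => ?_⟩
    split_ifs with hb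
    · simp [hb, eval_indicator_apply_eq_one, hga]
    · simp [eval_indicator_apply_eq_zero b a hb]
  choose w hwJ hw using hpoint
  refine ⟨∑ a, w a, Ideal.sum_mem _ fun a _ => hwJ a, fun b => ?_⟩
  simp only [map_sum, hw]
  by_cases hb : b ∈ (zeroLocus K J)ᶜ
  · rw [Set.indicator_of_mem hb, Finset.sum_eq_single ⟨b, hb⟩]
    · simp
    · intro a _ hab
      exact if_neg fun h => hab (Subtype.ext h).symm
    · simp
  · rw [Set.indicator_of_notMem hb]
    exact Finset.sum_eq_zero fun a _ => if_neg fun h : b = a => hb (h ▸ a.2)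

theorem vanishingIdeal_zeroLocus_eq_sup_fieldIdeal [Fintype σ] (J : Ideal (MvPolynomial σ K)) :
    vanishingIdeal K (zeroLocus K J) = J ⊔ fieldIdeal σ K := by
  refine le_antisymm (fun f hf => ?_)
    (sup_le (le_vanishingIdeal_zeroLocus J) (fieldIdeal_le_vanishingIdeal _))
  obtain ⟨u, huJ, hu⟩ := exists_mem_eval_eq_indicator_compl_zeroLocus J
  have hrest : f - f * u ∈ fieldIdeal σ K := mem_fieldIdeal_of_forall_eval_eq_zero fun b => by
    by_cases hb : b ∈ zeroLocus K J
    · have hfb : eval b f = 0 := hf b hb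
      simp [hu, hb, hfb]
    · simp [hu, hb]
  simpa using Submodule.add_mem_sup (J.mul_mem_left f huJ) hrest

end FiniteField
end MvPolynomial

theorem strong_nullstellensatz_finite_field
    {F : Type*} [Field F] [Fintype F] {q : ℕ} (hq : Fintype.card F = q)
    (n : ℕ) (J : Ideal (MvPolynomial (Fin n) F)) (f : MvPolynomial (Fin n) F) :
    (∀ a : Fin n → F, (∀ g ∈ J, eval a g = 0) → eval a f = 0) ↔
      f ∈ J + Ideal.span (Set.range fun i : Fin n =>
        (X i : MvPolynomial (Fin n) F) ^ q - X i) := by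
  subst hq
  rw [Ideal.add_eq_sup]
  exact SetLike.ext_iff.mp (vanishingIdeal_zeroLocus_eq_sup_fieldIdeal J) f
end

section
/- Let F_q be a finite field with q elements. A polynomial f ∈ F_q[x_1,...,x_n] vanishes at every point of F_q^n if and only if f belongs to the ideal ⟨x_1^q − x_1, ..., x_n^q − x_n⟩. Equivalently, the vanishing ideal of the whole affine space F_q^n is exactly the ideal generated by the field polynomials. -/
open MvPolynomial

set_option synthInstance.maxHeartbeats 1000000
set_option maxHeartbeats 1000000

namespace VanishAux

/-- The ideal generated by the field polynomials. -/
noncomputable def I (q n : ℕ) (F : Type*) [Field F] : Ideal (MvPolynomial (Fin n) F) :=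
  Ideal.span (Set.range fun i : Fin n => (X i : MvPolynomial (Fin n) F) ^ q - X i)

/-- Exponent reduction function. -/
def rq (q k : ℕ) : ℕ := if k = 0 then 0 else (k - 1) % (q - 1) + 1

lemma rq_zero (q : ℕ) : rq q 0 = 0 := rfl

lemma rq_le (q : ℕ) (hq : 2 ≤ q) (k : ℕ) : rq q k ≤ q - 1 := by
  unfold rq; split
  · omega
  · have := Nat.mod_lt (k - 1) (show 0 < q - 1 by omega)
    omega

variable {F : Type*} [Field F] {n : ℕ}

lemma mk_X_pow (q : ℕ) (hq : 2 ≤ q) (i : Fin n) (k : ℕ) :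
    Ideal.Quotient.mk (I q n F) (X i ^ k) = Ideal.Quotient.mk (I q n F) (X i ^ rq q k) := by
  induction k using Nat.strong_induction_on with
  | _ k ih =>
    by_cases hk : k < q
    · have h : rq q k = k := by unfold rq; split <;> [omega; (have := Nat.mod_eq_of_lt (show k - 1 < q - 1 by omega); omega)]
      rw [h]
    · push_neg at hk
      have h1 : Ideal.Quotient.mk (I q n F) (X i ^ k)
          = Ideal.Quotient.mk (I q n F) ((X i : MvPolynomial (Fin n) F) ^ (k - q + 1)) := by
        rw [Ideal.Quotient.eq]
        have e1 : (X i : MvPolynomial (Fin n) F) ^ k - X i ^ (k - q + 1)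
            = X i ^ (k - q) * ((X i : MvPolynomial (Fin n) F) ^ q - X i) := by
          rw [mul_sub, ← pow_add, ← pow_succ]
          congr 2 <;> omega
        rw [e1]
        exact Ideal.mul_mem_left _ _ (Ideal.subset_span ⟨i, rfl⟩)
      have h2 : rq q (k - q + 1) = rq q k := by
        have e1 : k - q + 1 - 1 = k - q := by omega
        have e2 : k - 1 = (k - q) + (q - 1) := by omega
        unfold rq
        rw [if_neg (by omega), if_neg (by omega), e1, e2, Nat.add_mod_right]
      rw [h1, ih (k - q + 1) (by omega), h2]

lemma mk_monomial (q : ℕ) (hq : 2 ≤ q) (d : (Fin n) →₀ ℕ) (c : F) :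
    Ideal.Quotient.mk (I q n F) (monomial (d.mapRange (rq q) (rq_zero q)) c)
      = Ideal.Quotient.mk (I q n F) (monomial d c) := by
  rw [monomial_eq, monomial_eq, map_mul, map_mul]
  congr 1
  rw [Finsupp.prod, Finsupp.prod, map_prod, map_prod]
  rw [show (∏ i ∈ (d.mapRange (rq q) (rq_zero q)).support,
        Ideal.Quotient.mk (I q n F) ((X i : MvPolynomial (Fin n) F) ^ ((d.mapRange (rq q) (rq_zero q)) i)))
      = (d.mapRange (rq q) (rq_zero q)).prod
          (fun i e => Ideal.Quotient.mk (I q n F) ((X i : MvPolynomial (Fin n) F) ^ e)) from rfl]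
  rw [Finsupp.prod_mapRange_index (by intro a; simp)]
  rw [show (∏ i ∈ d.support,
        Ideal.Quotient.mk (I q n F) ((X i : MvPolynomial (Fin n) F) ^ (d i)))
      = d.prod (fun i e => Ideal.Quotient.mk (I q n F) ((X i : MvPolynomial (Fin n) F) ^ e)) from rfl]
  exact Finsupp.prod_congr fun i _ => (mk_X_pow q hq i (d i)).symm

end VanishAux

open VanishAux in
theorem vanishing_ideal_affine_space_eq_span_fieldPolynomials
    {F : Type*} [Field F] [Fintype F] {q : ℕ} (hq : Fintype.card F = q)
    (n : ℕ) (f : MvPolynomial (Fin n) F) :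
    (∀ a : Fin n → F, eval a f = 0) ↔
      f ∈ Ideal.span (Set.range fun i : Fin n =>
        (X i : MvPolynomial (Fin n) F) ^ q - X i) := by
  subst hq
  have h2 : 2 ≤ Fintype.card F := Fintype.one_lt_card
  set q := Fintype.card F with hqdef
  have hIker : ∀ a : Fin n → F, I q n F ≤ RingHom.ker (eval a) := by
    intro a
    rw [I, Ideal.span_le]
    rintro _ ⟨i, rfl⟩
    rw [SetLike.mem_coe, RingHom.mem_ker, map_sub, map_pow, eval_X, hqdef,
      FiniteField.pow_card, sub_self]
  constructor
  · intro h
    -- reduce f modulo the ideal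
    set g : MvPolynomial (Fin n) F :=
      ∑ d ∈ f.support, monomial (d.mapRange (rq q) (rq_zero q)) (coeff d f) with hgdef
    have hmk : Ideal.Quotient.mk (I q n F) g = Ideal.Quotient.mk (I q n F) f := by
      rw [hgdef, map_sum]
      calc (∑ d ∈ f.support,
            Ideal.Quotient.mk (I q n F) (monomial (d.mapRange (rq q) (rq_zero q)) (coeff d f)))
          = ∑ d ∈ f.support, Ideal.Quotient.mk (I q n F) (monomial d (coeff d f)) := by
            exact Finset.sum_congr rfl fun d _ => mk_monomial q h2 d (coeff d f)
        _ = Ideal.Quotient.mk (I q n F) f := by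
            rw [← map_sum, support_sum_monomial_coeff]
    have hsub : f - g ∈ I q n F := by
      rw [← Ideal.Quotient.eq]; exact hmk.symm
    have hgeval : ∀ a : Fin n → F, eval a g = 0 := by
      intro a
      have : eval a (f - g) = 0 := hIker a hsub
      rw [map_sub, h a, zero_sub, neg_eq_zero] at this
      exact this
    have hgdeg : g ∈ restrictDegree (Fin n) F (Fintype.card F - 1) := by
      apply Submodule.sum_mem
      intro d _
      rw [mem_restrictDegree]
      intro s hs i
      have := support_monomial_subset hs
      rw [Finset.mem_singleton] at this
      subst this
      rw [Finsupp.mapRange_apply]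
      exact rq_le q h2 (d i)
    have hg0 : g = 0 := by
      classical
      set e : Fin n ≃ ULift (Fin n) := Equiv.ulift.symm with he
      have hg'deg : rename e g ∈ restrictDegree (ULift (Fin n)) F (Fintype.card F - 1) := by
        rw [mem_restrictDegree] at hgdeg ⊢
        intro s hs i
        rw [support_rename_of_injective e.injective] at hs
        obtain ⟨d, hd, rfl⟩ := Finset.mem_image.mp hs
        have hi : i = e (e.symm i) := (e.apply_symm_apply i).symm
        rw [hi, Finsupp.mapDomain_apply e.injective]
        exact hgdeg d hd _
      have h0 : rename e g = 0 :=
        eq_zero_of_eval_eq_zero (ULift (Fin n)) F (rename e g)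
          (fun v => by rw [eval_rename]; exact hgeval _) hg'deg
      have := rename_injective (R := F) (⇑e) e.injective
      apply this
      rw [h0, map_zero]
    have : Ideal.Quotient.mk (I q n F) f = 0 := by rw [← hmk, hg0, map_zero]
    exact Ideal.Quotient.eq_zero_iff_mem.mp this
  · intro hf a
    exact hIker a hf
end
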